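/- arXiv:1804.03452 — 4 statements merged into one kernel-verified Lean document; each statement's English description precedes it below -/
import Mathlib

section
/- Let Lx, Ly and m be positive integers with 2m < Lx and 2m < Ly. Then the number of unordered pairs {a, b} of distinct sites of the Lx × Ly lattice whose periodic uniform distance equals m is exactly 4·m·Lx·Ly. -/
/-!
On each coordinate axis, the sites at periodic distance at most `k` from a given site form an
arc of `2k + 1` sites, which does not overlap itself because `2k < L`. The periodic uniform ball
of radius `k` is the product of two such arcs, so the sphere of radius `m` has
`(2m + 1)² - (2m - 1)² = 8m` sites. Double counting incidences between sites and pairs, each site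
lies in `8m` of the pairs and each pair contains two sites, hence `2 · #pairs = 8m · Lx · Ly`.
-/

/-- The site set of the `Lx × Ly` square lattice. -/
def latticeSites (Lx Ly : ℕ) : Finset (ℕ × ℕ) :=
  Finset.range Lx ×ˢ Finset.range Ly

/-- The uniform (Chebyshev) distance under periodic boundary conditions on an
`Lx × Ly` lattice. -/
def periodicUniformDist (Lx Ly : ℕ) (a b : ℕ × ℕ) : ℕ :=
  max (min (Nat.dist a.1 b.1) (Lx - Nat.dist a.1 b.1))
    (min (Nat.dist a.2 b.2) (Ly - Nat.dist a.2 b.2))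

open Finset

lemma card_filter_eq_succ_add_card_filter_le {α : Type*} (s : Finset α) (f : α → ℕ) (k : ℕ) :
    #{x ∈ s | f x = k + 1} + #{x ∈ s | f x ≤ k} = #{x ∈ s | f x ≤ k + 1} := by
  rw [← card_filter_add_card_filter_not (s := {x ∈ s | f x ≤ k + 1}) (fun x => ¬ f x ≤ k),
    filter_filter, filter_filter]
  congr 2 <;> ext x <;> simp only [mem_filter, and_congr_right_iff] <;> omega

section RelatedPairs

variable {α : Type*} [DecidableEq α] (s : Finset α) (r : α → α → Prop) [DecidableRel r]

def relatedPairs : Finset (Finset α) :=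
  {p ∈ s.powersetCard 2 | ∃ a ∈ p, ∃ b ∈ p, a ≠ b ∧ r a b}

variable {s r} [Std.Symm r]

lemma pair_mem_relatedPairs {a b : α} :
    {a, b} ∈ relatedPairs s r ↔ a ∈ s ∧ b ∈ s ∧ a ≠ b ∧ r a b := by
  simp only [relatedPairs, mem_filter, mem_powersetCard, insert_subset_iff, singleton_subset_iff,
    card_pair_eq_two_iff, mem_insert, mem_singleton]
  constructor
  · rintro ⟨⟨⟨ha, hb⟩, hab⟩, x, hx, y, hy, hxy, hrxy⟩
    refine ⟨ha, hb, hab, ?_⟩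
    rcases hx with rfl | rfl <;> rcases hy with rfl | rfl
    exacts [absurd rfl hxy, hrxy, symm_of r hrxy, absurd rfl hxy]
  · rintro ⟨ha, hb, hab, hrab⟩
    exact ⟨⟨⟨ha, hb⟩, hab⟩, a, .inl rfl, b, .inr rfl, hab, hrab⟩

lemma card_filter_mem_relatedPairs {a : α} (ha : a ∈ s) :
    #{p ∈ relatedPairs s r | a ∈ p} = #{b ∈ s | a ≠ b ∧ r a b} := by
  symm
  refine card_bij (fun b _ => {a, b}) ?_ ?_ ?_
  · intro b hb
    rw [mem_filter] at hb ⊢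
    exact ⟨pair_mem_relatedPairs.2 ⟨ha, hb.1, hb.2⟩, mem_insert_self a _⟩
  · intro b₁ hb₁ b₂ _ h
    have hb₁a : b₁ ≠ a := (mem_filter.1 hb₁).2.1.symm
    have : b₁ ∈ ({a, b₂} : Finset α) := h ▸ mem_insert_of_mem (mem_singleton_self b₁)
    simpa [hb₁a] using this
  · intro p hp
    obtain ⟨hp, hap⟩ := mem_filter.1 hp
    obtain ⟨x, y, -, rfl⟩ := card_eq_two.1 (mem_powersetCard.1 (mem_filter.1 hp).1).2
    rcases mem_insert.1 hap with rfl | hay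
    · exact ⟨y, mem_filter.2 (pair_mem_relatedPairs.1 hp).2, rfl⟩
    · obtain rfl := mem_singleton.1 hay
      rw [pair_comm] at hp ⊢
      exact ⟨x, mem_filter.2 (pair_mem_relatedPairs.1 hp).2, rfl⟩

theorem card_relatedPairs_mul_two {d : ℕ} (hdeg : ∀ a ∈ s, #{b ∈ s | a ≠ b ∧ r a b} = d) :
    #(relatedPairs s r) * 2 = #s * d := by
  refine (card_mul_eq_card_mul (fun a p => a ∈ p) (fun a ha => ?_) (fun p hp => ?_)).symm
  · exact (card_filter_mem_relatedPairs ha).trans (hdeg a ha)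
  · obtain ⟨hps, hcard⟩ := mem_powersetCard.1 (mem_filter.1 hp).1
    change #{a ∈ s | a ∈ p} = 2
    rw [filter_mem_eq_inter, inter_eq_right.2 hps, hcard]

end RelatedPairs

def cyclicDist (L x y : ℕ) : ℕ := min (Nat.dist x y) (L - Nat.dist x y)

lemma cyclicDist_self (L x : ℕ) : cyclicDist L x x = 0 := by
  simp [cyclicDist]

lemma cyclicDist_comm (L x y : ℕ) : cyclicDist L x y = cyclicDist L y x := by
  simp [cyclicDist, Nat.dist_comm]

lemma cyclicDist_add_sub_add_mod_le {L a k t : ℕ} (ha : a < L) (hk : 2 * k < L)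
    (ht : t ≤ 2 * k) : cyclicDist L a ((a + (L - k) + t) % L) ≤ k := by
  have hquot : (a + (L - k) + t) / L < 3 := Nat.div_lt_of_lt_mul (by omega)
  have hdiv := Nat.div_add_mod (a + (L - k) + t) L
  unfold cyclicDist Nat.dist
  interval_cases (a + (L - k) + t) / L <;> omega

-- `(a + (L - k) + t) % L` is `a - k + t` modulo `L`, written without truncated subtraction.
lemma filter_cyclicDist_le_eq_image {L a k : ℕ} (ha : a < L) (hk : 2 * k < L) :
    {b ∈ range L | cyclicDist L a b ≤ k} =
      (range (2 * k + 1)).image (fun t => (a + (L - k) + t) % L) := by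
  ext b
  simp only [mem_filter, mem_image, mem_range]
  constructor
  · rintro ⟨hb, hdist⟩
    unfold cyclicDist Nat.dist at hdist
    rcases min_le_iff.mp hdist with hnear | hwrap
    · refine ⟨k + b - a, by omega, ?_⟩
      rw [show a + (L - k) + (k + b - a) = b + L by omega, Nat.add_mod_right, Nat.mod_eq_of_lt hb]
    · rcases Nat.lt_or_ge b a with hba | hab
      · refine ⟨k + L + b - a, by omega, ?_⟩
        rw [show a + (L - k) + (k + L + b - a) = b + L * 2 by omega, Nat.add_mul_mod_self_left,
          Nat.mod_eq_of_lt hb]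
      · refine ⟨k + b - a - L, by omega, ?_⟩
        rw [show a + (L - k) + (k + b - a - L) = b by omega, Nat.mod_eq_of_lt hb]
  · rintro ⟨t, ht, rfl⟩
    exact ⟨Nat.mod_lt _ (by omega), cyclicDist_add_sub_add_mod_le ha hk (by omega)⟩

theorem card_filter_cyclicDist_le {L a k : ℕ} (ha : a < L) (hk : 2 * k < L) :
    #{b ∈ range L | cyclicDist L a b ≤ k} = 2 * k + 1 := by
  rw [filter_cyclicDist_le_eq_image ha hk, card_image_of_injOn, card_range]
  intro t₁ ht₁ t₂ ht₂ heq
  simp only [coe_range, Set.mem_Iio] at ht₁ ht₂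
  have := Nat.ModEq.add_left_cancel' (a + (L - k)) (heq : _ ≡ _ [MOD L])
  rwa [Nat.ModEq, Nat.mod_eq_of_lt (by omega), Nat.mod_eq_of_lt (by omega)] at this

lemma periodicUniformDist_eq_max_cyclicDist (Lx Ly : ℕ) (a b : ℕ × ℕ) :
    periodicUniformDist Lx Ly a b = max (cyclicDist Lx a.1 b.1) (cyclicDist Ly a.2 b.2) :=
  rfl

lemma periodicUniformDist_self (Lx Ly : ℕ) (a : ℕ × ℕ) : periodicUniformDist Lx Ly a a = 0 := by
  simp [periodicUniformDist_eq_max_cyclicDist, cyclicDist_self]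

lemma periodicUniformDist_comm (Lx Ly : ℕ) (a b : ℕ × ℕ) :
    periodicUniformDist Lx Ly a b = periodicUniformDist Lx Ly b a := by
  rw [periodicUniformDist_eq_max_cyclicDist, cyclicDist_comm Lx, cyclicDist_comm Ly]
  rfl

instance (Lx Ly m : ℕ) : Std.Symm (fun a b => periodicUniformDist Lx Ly a b = m) :=
  ⟨fun a b h => (periodicUniformDist_comm Lx Ly b a).trans h⟩

lemma filter_periodicUniformDist_le_eq_product (Lx Ly k : ℕ) (a : ℕ × ℕ) :
    {b ∈ latticeSites Lx Ly | periodicUniformDist Lx Ly a b ≤ k} =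
      {x ∈ range Lx | cyclicDist Lx a.1 x ≤ k} ×ˢ {y ∈ range Ly | cyclicDist Ly a.2 y ≤ k} := by
  simp only [latticeSites, periodicUniformDist_eq_max_cyclicDist, max_le_iff]
  exact filter_product (fun x => cyclicDist Lx a.1 x ≤ k) (fun y => cyclicDist Ly a.2 y ≤ k)

theorem card_filter_periodicUniformDist_le {Lx Ly k : ℕ} {a : ℕ × ℕ}
    (ha : a ∈ latticeSites Lx Ly) (hkx : 2 * k < Lx) (hky : 2 * k < Ly) :
    #{b ∈ latticeSites Lx Ly | periodicUniformDist Lx Ly a b ≤ k} = (2 * k + 1) ^ 2 := by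
  rw [latticeSites, mem_product, mem_range, mem_range] at ha
  rw [filter_periodicUniformDist_le_eq_product, card_product, card_filter_cyclicDist_le ha.1 hkx,
    card_filter_cyclicDist_le ha.2 hky, sq]

theorem card_filter_periodicUniformDist_eq {Lx Ly m : ℕ} {a : ℕ × ℕ}
    (ha : a ∈ latticeSites Lx Ly) (hm : 0 < m) (hmx : 2 * m < Lx) (hmy : 2 * m < Ly) :
    #{b ∈ latticeSites Lx Ly | periodicUniformDist Lx Ly a b = m} = 8 * m := by
  obtain ⟨k, rfl⟩ : ∃ k, m = k + 1 := ⟨m - 1, by omega⟩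
  have h :=
    card_filter_eq_succ_add_card_filter_le (latticeSites Lx Ly) (periodicUniformDist Lx Ly a) k
  rw [card_filter_periodicUniformDist_le ha hmx hmy,
    card_filter_periodicUniformDist_le ha (by omega) (by omega)] at h
  linarith

theorem periodic_uniform_pair_count_general (Lx Ly m : ℕ)
    (hm : 0 < m) (hmx : 2 * m < Lx) (hmy : 2 * m < Ly) :
    (((latticeSites Lx Ly).powersetCard 2).filter
      (fun p => ∃ a ∈ p, ∃ b ∈ p, a ≠ b ∧ periodicUniformDist Lx Ly a b = m)).card
      = 4 * m * Lx * Ly := by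
  have hdeg : ∀ a ∈ latticeSites Lx Ly,
      #{b ∈ latticeSites Lx Ly | a ≠ b ∧ periodicUniformDist Lx Ly a b = m} = 8 * m := by
    intro a ha
    rw [← card_filter_periodicUniformDist_eq ha hm hmx hmy]
    congr 1
    refine filter_congr fun b _ => and_iff_right_of_imp fun hab => ?_
    rintro rfl
    rw [periodicUniformDist_self] at hab
    omega
  have h := card_relatedPairs_mul_two hdeg
  rw [show #(latticeSites Lx Ly) = Lx * Ly by simp [latticeSites]] at h
  change #(relatedPairs _ _) = _
  linarith

/-- For `0 < m` with `2m < Lx` and `2m < Ly`, the number of unordered pairs of distinct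
sites of the `Lx × Ly` lattice at periodic uniform distance exactly `m` is `4 * m * Lx * Ly`. -/
theorem periodic_uniform_pair_count (Lx Ly m : ℕ) (hLx : 0 < Lx) (hLy : 0 < Ly)
    (hm : 0 < m) (hmx : 2 * m < Lx) (hmy : 2 * m < Ly) :
    (((latticeSites Lx Ly).powersetCard 2).filter
      (fun p => ∃ a ∈ p, ∃ b ∈ p, a ≠ b ∧ periodicUniformDist Lx Ly a b = m)).card
      = 4 * m * Lx * Ly :=
  periodic_uniform_pair_count_general Lx Ly m hm hmx hmy
end

section
/- Let Lx, Ly and m be positive integers with 2m < Lx and 2m < Ly. Then the number of unordered pairs {a, b} of distinct sites of the Lx × Ly lattice such that the periodic taxicab distance between a and b equals m and the pair crosses the horizontal boundary (i.e. |a₂ − b₂| > Ly − |a₂ − b₂|) is exactly Lx · m². -/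
/-!
A crossing pair at distance `m` is listed once as an ordered pair `(a, b)` with `a₂ < b₂`. Such a
pair is determined by `a₁`, the horizontal offset `o = b₁ - a₁ mod Lx`, the vertical wrap length
`k = Ly - (b₂ - a₂)` and the height `a₂`; the conditions become `a₂ < k` and
`min o (Lx - o) + k = m`, crossing being automatic as `2m < Ly`. Since `2m < Lx`, the offsets
`o = m - k` (`k ≤ m`) and `o = Lx - (m - k)` (`k < m`) are distinct, and the two families of
pairs `(k, a₂)` fill the lower and upper triangles of an `m × m` square, giving `Lx · m²`.
-/

open Finset

/-- The taxicab distance under periodic boundary conditions on an `Lx × Ly` lattice. -/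
def periodicTaxicabDist (Lx Ly : ℕ) (a b : ℕ × ℕ) : ℕ :=
  min (Nat.dist a.1 b.1) (Lx - Nat.dist a.1 b.1) +
    min (Nat.dist a.2 b.2) (Ly - Nat.dist a.2 b.2)

theorem periodicTaxicabDist_comm (Lx Ly : ℕ) (a b : ℕ × ℕ) :
    periodicTaxicabDist Lx Ly a b = periodicTaxicabDist Lx Ly b a := by
  simp only [periodicTaxicabDist, Nat.dist_comm]

theorem Finset.card_filter_powersetCard_two_eq_card_filter_lt {α β : Type*} [DecidableEq α]
    [LinearOrder β] (s : Finset α) (f : α → β) (r : α → α → Prop) [DecidableRel r]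
    (hr : ∀ a b, r a b → r b a) (hf : ∀ a b, r a b → f a ≠ f b) :
    #{p ∈ s.powersetCard 2 | ∃ a ∈ p, ∃ b ∈ p, a ≠ b ∧ r a b} =
      #{q ∈ s ×ˢ s | f q.1 < f q.2 ∧ r q.1 q.2} := by
  symm
  refine card_bij (fun q _ => {q.1, q.2}) ?_ ?_ ?_
  · rintro ⟨a, b⟩ hq
    simp only [mem_filter, mem_product] at hq
    obtain ⟨⟨ha, hb⟩, hlt, hab⟩ := hq
    have hne : a ≠ b := fun h => (h ▸ hlt).false
    simp only [mem_filter, mem_powersetCard]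
    exact ⟨⟨insert_subset ha (singleton_subset_iff.2 hb), card_pair hne⟩,
      a, by simp, b, by simp, hne, hab⟩
  · rintro ⟨a, b⟩ hab ⟨c, d⟩ hcd heq
    simp only [mem_filter] at hab hcd
    have hpair := congrArg (fun p : Finset α => (p : Set α)) heq
    simp only [coe_pair, Set.pair_eq_pair_iff] at hpair
    rcases hpair with ⟨rfl, rfl⟩ | ⟨rfl, rfl⟩
    · rfl
    · exact absurd (hab.2.1.trans hcd.2.1) (lt_irrefl _)
  · intro p hp
    simp only [mem_filter, mem_powersetCard] at hp
    obtain ⟨⟨hps, hp2⟩, a, ha, b, hb, hne, hab⟩ := hp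
    obtain rfl : p = {a, b} :=
      (eq_of_subset_of_card_le (insert_subset ha (singleton_subset_iff.2 hb))
        (by rw [hp2, card_pair hne])).symm
    rcases (hf a b hab).lt_or_gt with hlt | hlt
    · exact ⟨(a, b), by simp [mem_product, hps ha, hps hb, hlt, hab], rfl⟩
    · exact ⟨(b, a), by simp [mem_product, hps ha, hps hb, hlt, hr a b hab], pair_comm b a⟩

def cyclicOffset (L x y : ℕ) : ℕ := (y + L - x) % L

section cyclicOffset

variable {L x y t : ℕ}

theorem cyclicOffset_lt (hL : 0 < L) : cyclicOffset L x y < L :=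
  Nat.mod_lt _ hL

theorem cyclicOffset_eq (hx : x < L) (hy : y < L) :
    cyclicOffset L x y = if x ≤ y then y - x else L - (x - y) := by
  unfold cyclicOffset
  split_ifs
  · rw [show y + L - x = y - x + L by omega, Nat.add_mod_right, Nat.mod_eq_of_lt (by omega)]
  · rw [Nat.mod_eq_of_lt (by omega)]; omega

theorem min_dist_eq_min_cyclicOffset (hx : x < L) (hy : y < L) :
    min (Nat.dist x y) (L - Nat.dist x y) =
      min (cyclicOffset L x y) (L - cyclicOffset L x y) := by
  rw [cyclicOffset_eq hx hy, Nat.dist]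
  split_ifs <;> omega

theorem add_cyclicOffset_mod (hx : x < L) (hy : y < L) : (x + cyclicOffset L x y) % L = y := by
  rw [cyclicOffset_eq hx hy]
  split_ifs
  · rw [Nat.add_sub_cancel' ‹_›, Nat.mod_eq_of_lt hy]
  · rw [show x + (L - (x - y)) = y + L by omega, Nat.add_mod_right, Nat.mod_eq_of_lt hy]

theorem cyclicOffset_add_mod (hx : x < L) (ht : t < L) : cyclicOffset L x ((x + t) % L) = t := by
  rw [cyclicOffset_eq hx (Nat.mod_lt _ (by omega))]
  rcases lt_or_ge (x + t) L with h | h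
  · rw [Nat.mod_eq_of_lt h]; simp
  · rw [Nat.mod_eq_sub_mod h, Nat.mod_eq_of_lt (by omega)]
    split_ifs <;> omega

end cyclicOffset

/-- Triples `(o, k, y)`: horizontal offset `o` modulo `L`, vertical wrap length `k` and height
`y < k` of the lower site of a crossing pair at distance `m`. -/
def crossingParams (L m : ℕ) : Finset (ℕ × ℕ × ℕ) :=
  {q ∈ range L ×ˢ range (m + 1) ×ˢ range m | q.2.2 < q.2.1 ∧ min q.1 (L - q.1) + q.2.1 = m}

theorem card_crossingParams {L m : ℕ} (hm : 2 * m < L) : #(crossingParams L m) = m ^ 2 := by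
  suffices h : _ = #(range m ×ˢ range m) by rwa [card_product, card_range, ← sq] at h
  -- The branch `o = m - k` goes to the triangle `v ≤ u`, the branch `o = L - (m - k)` to `u < v`.
  refine card_nbij'
    (fun q => if 2 * q.1 ≤ L then (q.2.1 - 1, q.2.2) else (q.2.2, q.2.1))
    (fun p => if p.2 ≤ p.1 then (m - (p.1 + 1), p.1 + 1, p.2) else (L - (m - p.2), p.2, p.1))
    ?_ ?_ ?_ ?_
  all_goals
    simp only [Set.MapsTo, Set.LeftInvOn, crossingParams, coe_filter, coe_product, coe_range,
      mem_product, mem_range, Set.mem_prod, Set.mem_Iio, Set.mem_ofPred_eq, Prod.forall]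
    intros
    split_ifs <;> simp only [Prod.mk.injEq, and_true] at * <;> omega

theorem card_orderedCrossingPairs {Lx Ly m : ℕ} (hmx : 2 * m < Lx) (hmy : 2 * m < Ly) :
    #{q ∈ latticeSites Lx Ly ×ˢ latticeSites Lx Ly | q.1.2 < q.2.2 ∧
      periodicTaxicabDist Lx Ly q.1 q.2 = m ∧ Ly - Nat.dist q.1.2 q.2.2 < Nat.dist q.1.2 q.2.2} =
      Lx * m ^ 2 := by
  calc _ = #(range Lx ×ˢ crossingParams Lx m) := ?_
    _ = Lx * m ^ 2 := by rw [card_product, card_range, card_crossingParams hmx]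
  refine card_bij'
    (fun q _ => (q.1.1, cyclicOffset Lx q.1.1 q.2.1, Ly - (q.2.2 - q.1.2), q.1.2))
    (fun r _ => ((r.1, r.2.2.2), ((r.1 + r.2.1) % Lx, r.2.2.2 + Ly - r.2.2.1)))
    (fun q hq => ?_) (fun r hr => ?_) (fun q hq => ?_) (fun r hr => ?_)
  · rw [mem_filter] at hq
    simp only [mem_product, latticeSites, crossingParams, mem_filter, mem_range,
      periodicTaxicabDist] at hq ⊢
    obtain ⟨⟨⟨hx, hy⟩, hx', hy'⟩, hyy', hdist, hcross⟩ := hq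
    rw [min_dist_eq_min_cyclicOffset hx hx', Nat.dist_eq_sub_of_le hyy'.le] at hdist
    rw [Nat.dist_eq_sub_of_le hyy'.le] at hcross
    have ho := cyclicOffset_lt (x := q.1.1) (y := q.2.1) (by omega : 0 < Lx)
    omega
  · rw [mem_filter]
    simp only [mem_product, latticeSites, crossingParams, mem_filter, mem_range,
      periodicTaxicabDist] at hr ⊢
    obtain ⟨hx, ⟨ho, hk, hy⟩, hyk, hdist⟩ := hr
    have hyy' : r.2.2.2 ≤ r.2.2.2 + Ly - r.2.2.1 := by omega
    have hx' : (r.1 + r.2.1) % Lx < Lx := Nat.mod_lt _ (by omega)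
    rw [min_dist_eq_min_cyclicOffset hx hx', cyclicOffset_add_mod hx ho,
      Nat.dist_eq_sub_of_le hyy']
    omega
  · obtain ⟨⟨x, y⟩, x', y'⟩ := q
    simp only [mem_filter, mem_product, latticeSites, mem_range] at hq
    obtain ⟨⟨⟨hx, -⟩, hx', hy'⟩, hyy', -⟩ := hq
    simp only [add_cyclicOffset_mod hx hx', Prod.mk.injEq, true_and]
    omega
  · obtain ⟨x, o, k, y⟩ := r
    simp only [crossingParams, mem_filter, mem_product, mem_range] at hr
    obtain ⟨hx, ⟨ho, hk, -⟩, hyk, -⟩ := hr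
    simp only [cyclicOffset_add_mod hx ho, Prod.mk.injEq, true_and, and_true]
    omega

theorem periodic_taxicab_horizontal_crossing_count_general (Lx Ly m : ℕ)
    (hmx : 2 * m < Lx) (hmy : 2 * m < Ly) :
    (((latticeSites Lx Ly).powersetCard 2).filter
      (fun p => ∃ a ∈ p, ∃ b ∈ p, a ≠ b ∧ periodicTaxicabDist Lx Ly a b = m ∧
        Ly - Nat.dist a.2 b.2 < Nat.dist a.2 b.2)).card
      = Lx * m ^ 2 := by
  rw [card_filter_powersetCard_two_eq_card_filter_lt _ Prod.snd
    (fun a b => periodicTaxicabDist Lx Ly a b = m ∧ Ly - Nat.dist a.2 b.2 < Nat.dist a.2 b.2)]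
  · exact card_orderedCrossingPairs hmx hmy
  · intro a b hab
    rwa [periodicTaxicabDist_comm, Nat.dist_comm]
  · rintro a b ⟨-, hcross⟩ hab
    rw [hab, Nat.dist_self] at hcross
    exact Nat.not_lt_zero _ hcross

/-- For `0 < m` with `2m < Lx` and `2m < Ly`, the number of unordered pairs of distinct
sites at periodic taxicab distance `m` that cross the horizontal boundary
(`|a₂ − b₂| > Ly − |a₂ − b₂|`) is exactly `Lx * m ^ 2`. -/
theorem periodic_taxicab_horizontal_crossing_count (Lx Ly m : ℕ)
    (hLx : 0 < Lx) (hLy : 0 < Ly) (hm : 0 < m) (hmx : 2 * m < Lx) (hmy : 2 * m < Ly) :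
    (((latticeSites Lx Ly).powersetCard 2).filter
      (fun p => ∃ a ∈ p, ∃ b ∈ p, a ≠ b ∧ periodicTaxicabDist Lx Ly a b = m ∧
        Ly - Nat.dist a.2 b.2 < Nat.dist a.2 b.2)).card
      = Lx * m ^ 2 :=
  periodic_taxicab_horizontal_crossing_count_general Lx Ly m hmx hmy
end

section
/- Let Lx, Ly and m be positive integers with 2m < Lx and 2m < Ly. Then the number of unordered pairs {a, b} of distinct sites of the Lx × Ly lattice such that the periodic taxicab distance between a and b equals m and the pair crosses both boundaries (i.e. |a₁ − b₁| > Lx − |a₁ − b₁| and |a₂ − b₂| > Ly − |a₂ − b₂|) is exactly (m³ − m)/3; equivalently, three times this count equals m³ − m. -/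
/-!
A pair crossing both boundaries is at periodic distance `(Lx - d₁) + (Ly - d₂)`, where `dᵢ` are the
coordinate distances. On a cycle of length `L > 2u` there are exactly `2u` ordered pairs whose
wrapped distance `L - d` equals `u`, namely `(x, x + L - u)` and `(x + L - u, x)` for `x < u`.
Splitting `m = u + (m - u)` therefore gives `∑ u ≤ m, 2u · 2(m - u)` ordered pairs, i.e. twice the
number of unordered ones, and `6 ∑ u ≤ m, u (m - u) = m³ - m`.
-/

namespace Finset

theorem pair_eq_iff_of_card_eq_two {α : Type*} [DecidableEq α] {p : Finset α} (hp : #p = 2)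
    {x y : α} : {x, y} = p ↔ x ∈ p ∧ y ∈ p ∧ x ≠ y := by
  constructor
  · rintro rfl
    refine ⟨mem_insert_self x _, mem_insert_of_mem (mem_singleton_self y), fun hxy => ?_⟩
    simp [hxy] at hp
  · rintro ⟨hx, hy, hxy⟩
    exact eq_of_subset_of_card_le (insert_subset hx (singleton_subset_iff.2 hy))
      (by rw [hp, card_pair hxy])

theorem card_offDiag_filter_eq_two_mul {α : Type*} [DecidableEq α] (s : Finset α)
    (r : α → α → Prop) [DecidableRel r] (hr : ∀ a b, r a b → r b a) :
    #(s.offDiag.filter fun q => r q.1 q.2) =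
      2 * #((s.powersetCard 2).filter fun p => ∃ a ∈ p, ∃ b ∈ p, a ≠ b ∧ r a b) := by
  rw [card_eq_sum_card_fiberwise (f := fun q => ({q.1, q.2} : Finset α)), sum_const_nat, mul_comm]
  · rintro p hp
    obtain ⟨⟨hps, hp2⟩, a, ha, b, hb, hab, hrab⟩ := by
      simpa only [mem_filter, mem_powersetCard] using hp
    have hrp : ∀ x ∈ p, ∀ y ∈ p, x ≠ y → r x y := by
      rw [← (pair_eq_iff_of_card_eq_two hp2).2 ⟨ha, hb, hab⟩]
      simp only [mem_insert, mem_singleton]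
      rintro x (rfl | rfl) y (rfl | rfl) hxy
      exacts [absurd rfl hxy, hrab, hr _ _ hrab, absurd rfl hxy]
    calc #{q ∈ s.offDiag.filter (fun q => r q.1 q.2) | ({q.1, q.2} : Finset α) = p}
        = #p.offDiag := by
          congr 1
          ext ⟨x, y⟩
          simp only [mem_filter, mem_offDiag, pair_eq_iff_of_card_eq_two hp2]
          exact ⟨fun h => h.2, fun ⟨hx, hy, hxy⟩ =>
            ⟨⟨⟨hps hx, hps hy, hxy⟩, hrp x hx y hy hxy⟩, hx, hy, hxy⟩⟩
      _ = 2 := by rw [offDiag_card, hp2]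
  · rintro ⟨a, b⟩ hq
    simp only [mem_coe, mem_filter, mem_offDiag] at hq
    obtain ⟨⟨ha, hb, hab⟩, hrab⟩ := hq
    simp only [mem_coe, mem_filter, mem_powersetCard]
    exact ⟨⟨insert_subset ha (singleton_subset_iff.2 hb), card_pair hab⟩,
      a, mem_insert_self a _, b, mem_insert_of_mem (mem_singleton_self b), hab, hrab⟩

end Finset

open Finset

theorem six_mul_sum_range_mul_sub_add (m : ℕ) :
    6 * ∑ u ∈ range (m + 1), u * (m - u) + m = m ^ 3 := by
  induction m with
  | zero => simp
  | succ m ih =>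
    have hsplit : ∑ u ∈ range (m + 2), u * (m + 1 - u) =
        ∑ u ∈ range (m + 1), u * (m - u) + ∑ u ∈ range (m + 1), u := by
      rw [sum_range_succ, Nat.sub_self, mul_zero, add_zero, ← sum_add_distrib]
      refine sum_congr rfl fun u hu => ?_
      rw [Nat.sub_add_comm (Nat.le_of_lt_succ (mem_range.1 hu)), mul_add_one]
    have hgauss := sum_range_id_mul_two (m + 1)
    rw [Nat.add_sub_cancel] at hgauss
    rw [hsplit]
    linear_combination ih + 3 * hgauss

def boundaryCrossingPairs (L u : ℕ) : Finset (ℕ × ℕ) :=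
  {q ∈ range L ×ˢ range L | L - Nat.dist q.1 q.2 = u ∧ L - Nat.dist q.1 q.2 < Nat.dist q.1 q.2}

theorem boundaryCrossingPairs_eq {L u : ℕ} (hu : 2 * u < L) :
    boundaryCrossingPairs L u =
      (range u).image (fun x => (x + (L - u), x)) ∪ (range u).image (fun x => (x, x + (L - u))) := by
  ext ⟨x, y⟩
  simp only [boundaryCrossingPairs, mem_filter, mem_product, mem_range, mem_union, mem_image,
    Nat.dist_eq_max_sub_min, Prod.mk.injEq]
  constructor
  · rintro ⟨⟨hx, hy⟩, hdist, hcross⟩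
    rcases le_or_gt y x with h | h
    · exact Or.inl ⟨y, by omega, by omega, rfl⟩
    · exact Or.inr ⟨x, by omega, rfl, by omega⟩
  · rintro (⟨z, hz, rfl, rfl⟩ | ⟨z, hz, rfl, rfl⟩) <;> omega

theorem card_boundaryCrossingPairs {L u : ℕ} (hu : 2 * u < L) :
    #(boundaryCrossingPairs L u) = 2 * u := by
  rw [boundaryCrossingPairs_eq hu, card_union_of_disjoint, card_image_of_injective,
    card_image_of_injective, card_range, two_mul]
  · exact fun a b h => congrArg Prod.fst h
  · exact fun a b h => congrArg Prod.snd h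
  · simp only [disjoint_left, mem_image, mem_range, not_exists, not_and]
    rintro _ ⟨z, hz, rfl⟩ w hw h
    simp only [Prod.mk.injEq] at h
    omega

theorem offDiag_filter_doubleCrossing_eq (Lx Ly m : ℕ) :
    (latticeSites Lx Ly).offDiag.filter (fun q => periodicTaxicabDist Lx Ly q.1 q.2 = m ∧
        Lx - Nat.dist q.1.1 q.2.1 < Nat.dist q.1.1 q.2.1 ∧
        Ly - Nat.dist q.1.2 q.2.2 < Nat.dist q.1.2 q.2.2) =
      ((range (m + 1)).biUnion fun u =>
        boundaryCrossingPairs Lx u ×ˢ boundaryCrossingPairs Ly (m - u)).map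
          (Equiv.prodProdProdComm ℕ ℕ ℕ ℕ).toEmbedding := by
  ext ⟨⟨a₁, a₂⟩, b₁, b₂⟩
  simp only [mem_map_equiv, Equiv.prodProdProdComm_symm, Equiv.prodProdProdComm_apply, mem_biUnion,
    mem_filter, mem_offDiag, mem_product, boundaryCrossingPairs, latticeSites, periodicTaxicabDist,
    mem_range, Nat.dist_eq_max_sub_min, ne_eq, Prod.mk.injEq]
  constructor
  · rintro ⟨_, _⟩
    exact ⟨Lx - (max a₁ b₁ - min a₁ b₁), by omega, by omega⟩
  · rintro ⟨u, _, _⟩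
    omega

theorem card_offDiag_filter_doubleCrossing {Lx Ly m : ℕ} (hmx : 2 * m < Lx) (hmy : 2 * m < Ly) :
    #((latticeSites Lx Ly).offDiag.filter (fun q => periodicTaxicabDist Lx Ly q.1 q.2 = m ∧
        Lx - Nat.dist q.1.1 q.2.1 < Nat.dist q.1.1 q.2.1 ∧
        Ly - Nat.dist q.1.2 q.2.2 < Nat.dist q.1.2 q.2.2)) =
      4 * ∑ u ∈ range (m + 1), u * (m - u) := by
  rw [offDiag_filter_doubleCrossing_eq, card_map, card_biUnion, mul_sum]
  · refine sum_congr rfl fun u hu => ?_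
    have hu : u ≤ m := Nat.le_of_lt_succ (mem_range.1 hu)
    rw [card_product, card_boundaryCrossingPairs (by omega), card_boundaryCrossingPairs (by omega)]
    ring
  · intro u _ v _ huv
    refine disjoint_left.2 fun q hu hv => huv ?_
    rw [mem_product, boundaryCrossingPairs, mem_filter] at hu hv
    exact hu.1.2.1.symm.trans hv.1.2.1

theorem periodic_taxicab_double_crossing_count_general (Lx Ly m : ℕ)
    (hmx : 2 * m < Lx) (hmy : 2 * m < Ly) :
    3 * (((latticeSites Lx Ly).powersetCard 2).filter
      (fun p => ∃ a ∈ p, ∃ b ∈ p, a ≠ b ∧ periodicTaxicabDist Lx Ly a b = m ∧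
        Lx - Nat.dist a.1 b.1 < Nat.dist a.1 b.1 ∧
        Ly - Nat.dist a.2 b.2 < Nat.dist a.2 b.2)).card
      = m ^ 3 - m := by
  have hordered := card_offDiag_filter_eq_two_mul (latticeSites Lx Ly)
    (fun a b => periodicTaxicabDist Lx Ly a b = m ∧
      Lx - Nat.dist a.1 b.1 < Nat.dist a.1 b.1 ∧ Ly - Nat.dist a.2 b.2 < Nat.dist a.2 b.2)
    (fun a b => by simp only [periodicTaxicabDist, Nat.dist_comm a.1, Nat.dist_comm a.2]; exact id)
  rw [card_offDiag_filter_doubleCrossing hmx hmy] at hordered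
  have hcube := six_mul_sum_range_mul_sub_add m
  omega

/-- For `0 < m` with `2m < Lx` and `2m < Ly`, three times the number of unordered pairs
of distinct sites at periodic taxicab distance `m` that cross both boundaries
(`|a₁ − b₁| > Lx − |a₁ − b₁|` and `|a₂ − b₂| > Ly − |a₂ − b₂|`) equals `m³ − m`. -/
theorem periodic_taxicab_double_crossing_count (Lx Ly m : ℕ)
    (hLx : 0 < Lx) (hLy : 0 < Ly) (hm : 0 < m) (hmx : 2 * m < Lx) (hmy : 2 * m < Ly) :
    3 * (((latticeSites Lx Ly).powersetCard 2).filter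
      (fun p => ∃ a ∈ p, ∃ b ∈ p, a ≠ b ∧ periodicTaxicabDist Lx Ly a b = m ∧
        Lx - Nat.dist a.1 b.1 < Nat.dist a.1 b.1 ∧
        Ly - Nat.dist a.2 b.2 < Nat.dist a.2 b.2)).card
      = m ^ 3 - m :=
  periodic_taxicab_double_crossing_count_general Lx Ly m hmx hmy
end

section
/- Let G_tri be the simple graph on vertex set ℤ × ℤ in which a vertex (x, y) is adjacent to (x−1, y) and (x+1, y), and additionally adjacent to (x, y−1) if x + y is even and to (x, y+1) if x + y is odd. Then for every integer m ≥ 1, the set of vertices at graph distance exactly m from the origin (0,0) is finite and has cardinality exactly 3m. -/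
/-- The neighbour relation of a triangular tessellation on `ℤ × ℤ`: site `(x, y)` (an
upward triangle when `x + y` is even, downward when odd) is related to `(x−1, y)` and
`(x+1, y)`, and to `(x, y−1)` if `x + y` is even, or to `(x, y+1)` if `x + y` is odd. -/
def triRel (a b : ℤ × ℤ) : Prop :=
  b = (a.1 - 1, a.2) ∨ b = (a.1 + 1, a.2) ∨
    (Even (a.1 + a.2) ∧ b = (a.1, a.2 - 1)) ∨ (¬ Even (a.1 + a.2) ∧ b = (a.1, a.2 + 1))

/-- The graph of the triangular tessellation. -/
def triGraph : SimpleGraph (ℤ × ℤ) :=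
  SimpleGraph.fromRel triRel

/-!
Along every edge the height `2y + ((x + y) mod 2)` changes by exactly one and `|x| + |y|` by at
most one, so `triDist (x, y) = max (|x| + |y|) |2y + ((x + y) mod 2)|` is `1`-Lipschitz; and every
site other than the origin has a neighbour one step closer in `triDist`. Hence `triDist` is the
graph distance from the origin. Its level set `triDist = m` is the boundary of a hexagon: on the
top row `y = ⌊m/2⌋` every second site with `|x| ≤ ⌈m/2⌉` (`⌈m/2⌉ + 1` sites), on the bottom row
`y = -⌈m/2⌉` every second site with `|x| ≤ ⌊m/2⌋` (`⌊m/2⌋ + 1` sites), and the two sites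
`(±(m - |y|), y)` on each of the `m - 1` rows in between: `3m` sites in all.
-/

namespace SimpleGraph

variable {V : Type*} {G : SimpleGraph V} {f : V → ℕ}

lemma le_add_length_of_adj_le (hf : ∀ a b, G.Adj a b → f b ≤ f a + 1) {u v : V}
    (p : G.Walk u v) : f v ≤ f u + p.length := by
  induction p with
  | nil => simp
  | cons h _ ih => have := hf _ _ h; rw [Walk.length_cons]; omega

lemma exists_walk_length_eq_of_descent {u : V} (hu : ∀ v, f v = 0 → v = u)
    (hdesc : ∀ v, f v ≠ 0 → ∃ a, G.Adj a v ∧ f a + 1 = f v) (v : V) :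
    ∃ p : G.Walk u v, p.length = f v := by
  induction hn : f v generalizing v with
  | zero => obtain rfl := hu v hn; exact ⟨Walk.nil, rfl⟩
  | succ n ih =>
    obtain ⟨a, hav, ha⟩ := hdesc v (by omega)
    obtain ⟨p, hp⟩ := ih a (by omega)
    exact ⟨p.concat hav, by rw [Walk.length_concat]; omega⟩

theorem dist_eq_of_descent {u : V} (hf : ∀ a b, G.Adj a b → f b ≤ f a + 1)
    (hu : ∀ v, f v = 0 ↔ v = u) (hdesc : ∀ v, f v ≠ 0 → ∃ a, G.Adj a v ∧ f a + 1 = f v)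
    (v : V) : G.dist u v = f v := by
  obtain ⟨p, hp⟩ := exists_walk_length_eq_of_descent (fun v => (hu v).1) hdesc v
  obtain ⟨q, hq⟩ := p.reachable.exists_walk_length_eq_dist
  refine le_antisymm (hp ▸ dist_le p) ?_
  simpa only [(hu u).2 rfl, zero_add, hq] using le_add_length_of_adj_le hf q

end SimpleGraph

lemma triRel_symm {a b : ℤ × ℤ} (h : triRel a b) : triRel b a := by
  simp only [triRel, Int.even_iff, Prod.ext_iff] at h ⊢
  omega

lemma triRel_irrefl (a : ℤ × ℤ) : ¬ triRel a a := by
  simp only [triRel, Int.even_iff, Prod.ext_iff]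
  omega

lemma triGraph_adj_iff {a b : ℤ × ℤ} : triGraph.Adj a b ↔ triRel a b := by
  rw [triGraph, SimpleGraph.fromRel_adj]
  exact ⟨fun ⟨_, h⟩ => h.elim id triRel_symm,
    fun h => ⟨fun hab => triRel_irrefl a (hab ▸ h), Or.inl h⟩⟩

def triDist (b : ℤ × ℤ) : ℕ :=
  max (b.1.natAbs + b.2.natAbs) (2 * b.2 + (b.1 + b.2) % 2).natAbs

lemma triDist_le_of_triRel {a b : ℤ × ℤ} (h : triRel a b) : triDist b ≤ triDist a + 1 := by
  simp only [triRel, Int.even_iff, Prod.ext_iff, triDist] at h ⊢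
  omega

lemma triDist_eq_zero_iff {b : ℤ × ℤ} : triDist b = 0 ↔ b = (0, 0) := by
  simp only [triDist, Prod.ext_iff]
  omega

lemma exists_triRel_triDist_succ {b : ℤ × ℤ} (h : triDist b ≠ 0) :
    ∃ a, triRel b a ∧ triDist a + 1 = triDist b := by
  obtain ⟨x, y⟩ := b
  simp only [triDist] at h ⊢
  by_cases hup : 0 < y ∧ (x + y) % 2 = 0
  · exact ⟨(x, y - 1), Or.inr (Or.inr (Or.inl ⟨Int.even_iff.2 hup.2, rfl⟩)), by omega⟩
  by_cases hdown : y < 0 ∧ (x + y) % 2 = 1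
  · exact ⟨(x, y + 1), Or.inr (Or.inr (Or.inr ⟨by rw [Int.even_iff]; omega, rfl⟩)), by omega⟩
  by_cases hright : 0 < x
  · exact ⟨(x - 1, y), Or.inl rfl, by omega⟩
  · exact ⟨(x + 1, y), Or.inr (Or.inl rfl), by omega⟩

theorem triGraph_dist_eq (b : ℤ × ℤ) : triGraph.dist (0, 0) b = triDist b :=
  SimpleGraph.dist_eq_of_descent
    (fun _ _ h => triDist_le_of_triRel (triGraph_adj_iff.1 h))
    (fun _ => triDist_eq_zero_iff)
    (fun _ h => (exists_triRel_triDist_succ h).imp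
      fun _ ⟨hr, hd⟩ => ⟨(triGraph_adj_iff.2 hr).symm, hd⟩)
    b

noncomputable section

def triSphereTop (m : ℕ) : Finset (ℤ × ℤ) :=
  (Finset.Icc (0 : ℤ) ((m + 1) / 2)).image fun i => (2 * i - (m + 1) / 2, m / 2)

def triSphereBot (m : ℕ) : Finset (ℤ × ℤ) :=
  (Finset.Icc (0 : ℤ) (m / 2)).image fun i => (2 * i - m / 2, -((m + 1) / 2))

def triSphereLeft (m : ℕ) : Finset (ℤ × ℤ) :=
  (Finset.Ioo (-(((m : ℤ) + 1) / 2)) (m / 2)).image fun y => ((y.natAbs : ℤ) - m, y)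

def triSphereRight (m : ℕ) : Finset (ℤ × ℤ) :=
  (Finset.Ioo (-(((m : ℤ) + 1) / 2)) (m / 2)).image fun y => (m - y.natAbs, y)

def triSphere (m : ℕ) : Finset (ℤ × ℤ) :=
  triSphereTop m ∪ triSphereBot m ∪ triSphereLeft m ∪ triSphereRight m

end

lemma mem_triSphere_iff {m : ℕ} {b : ℤ × ℤ} : b ∈ triSphere m ↔ triDist b = m := by
  obtain ⟨x, y⟩ := b
  simp only [triDist, triSphere, triSphereTop, triSphereBot, triSphereLeft, triSphereRight,
    Finset.mem_union, Finset.mem_image, Finset.mem_Icc, Finset.mem_Ioo, Prod.ext_iff]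
  constructor
  · rintro (((⟨i, hi, hx, hy⟩ | ⟨i, hi, hx, hy⟩) | ⟨z, hz, hx, hy⟩) | ⟨z, hz, hx, hy⟩) <;> omega
  · intro h
    by_cases htop : 2 * y = m - m % 2
    · -- `omega` alone does not find this one without the case split on the parity of `x + y`
      rcases Int.emod_two_eq_zero_or_one (x + y) with hp | hp <;>
        exact .inl (.inl (.inl ⟨(x + (m + 1) / 2) / 2, by omega⟩))
    by_cases hbot : 2 * y = -m - m % 2
    · exact .inl (.inl (.inr ⟨(x + m / 2) / 2, by omega⟩))
    by_cases hleft : x < 0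
    · exact .inl (.inr ⟨y, by omega⟩)
    · exact .inr ⟨y, by omega⟩

lemma card_triSphereTop (m : ℕ) : (triSphereTop m).card = (m + 1) / 2 + 1 := by
  rw [triSphereTop, Finset.card_image_of_injective _ fun i j h => by
    simp only [Prod.ext_iff] at h; omega, Int.card_Icc]
  omega

lemma card_triSphereBot (m : ℕ) : (triSphereBot m).card = m / 2 + 1 := by
  rw [triSphereBot, Finset.card_image_of_injective _ fun i j h => by
    simp only [Prod.ext_iff] at h; omega, Int.card_Icc]
  omega

lemma card_triSphereLeft (m : ℕ) : (triSphereLeft m).card = m - 1 := by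
  rw [triSphereLeft, Finset.card_image_of_injective _ fun _ _ h => (Prod.ext_iff.1 h).2,
    Int.card_Ioo]
  omega

lemma card_triSphereRight (m : ℕ) : (triSphereRight m).card = m - 1 := by
  rw [triSphereRight, Finset.card_image_of_injective _ fun _ _ h => (Prod.ext_iff.1 h).2,
    Int.card_Ioo]
  omega

lemma card_triSphere {m : ℕ} (hm : 1 ≤ m) : (triSphere m).card = 3 * m := by
  rw [triSphere, Finset.card_union_of_disjoint, Finset.card_union_of_disjoint,
    Finset.card_union_of_disjoint, card_triSphereTop, card_triSphereBot, card_triSphereLeft,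
    card_triSphereRight]
  · omega
  all_goals
    simp only [Finset.disjoint_iff_ne, Finset.mem_union, or_imp, forall_and, triSphereTop,
      triSphereBot, triSphereLeft, triSphereRight, Finset.forall_mem_image, ne_eq, Prod.mk.injEq,
      Finset.mem_Icc, Finset.mem_Ioo]
    repeat' constructor
  all_goals intros; omega

/-- For every `m ≥ 1`, the set of vertices of the triangular-tessellation graph at graph
distance exactly `m` from the origin is finite with cardinality `3 * m`. -/
theorem triGraph_sphere_card (m : ℕ) (hm : 1 ≤ m) :
    {b : ℤ × ℤ | triGraph.dist (0, 0) b = m}.Finite ∧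
    {b : ℤ × ℤ | triGraph.dist (0, 0) b = m}.ncard = 3 * m := by
  have hsphere : {b : ℤ × ℤ | triGraph.dist (0, 0) b = m} = triSphere m := by
    ext b
    rw [Set.mem_ofPred_eq, triGraph_dist_eq, Finset.mem_coe, mem_triSphere_iff]
  rw [hsphere, Set.ncard_coe_finset, card_triSphere hm]
  exact ⟨(triSphere m).finite_toSet, rfl⟩
end
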